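/- Let G be a connected graph of diameter at most 2. Then G*_−, the graph obtained from G* by removing isolated vertices, is isomorphic to G_SR. -/

import Mathlib

open SimpleGraph

namespace Paper

variable {α β : Type*}

/-- The lexicographic product of two simple graphs. -/
def lexProd (G : SimpleGraph α) (H : SimpleGraph β) : SimpleGraph (α × β) where
  Adj p q := G.Adj p.1 q.1 ∨ (p.1 = q.1 ∧ H.Adj p.2 q.2)
  symm := by
    constructor
    rintro ⟨a, b⟩ ⟨c, d⟩ (h | ⟨h1, h2⟩)
    · exact Or.inl h.symm
    · exact Or.inr ⟨h1.symm, h2.symm⟩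
  loopless := by
    constructor
    rintro ⟨a, b⟩ (h | ⟨h1, h2⟩)
    · exact G.irrefl h
    · exact H.irrefl h2

/-- `u` is maximally distant from `v`. -/
def MaxDistant (G : SimpleGraph α) (u v : α) : Prop :=
  ∀ w, G.Adj u w → G.edist v w ≤ G.edist u v

/-- `u` and `v` are mutually maximally distant. -/
def MMD (G : SimpleGraph α) (u v : α) : Prop :=
  MaxDistant G u v ∧ MaxDistant G v u

/-- Two vertices are true twins if they have the same closed neighborhood. -/
def TrueTwins (G : SimpleGraph α) (u v : α) : Prop :=
  ∀ w, (G.Adj u w ∨ u = w) ↔ (G.Adj v w ∨ v = w)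

/-- The boundary of a graph: vertices belonging to some mutually maximally distant pair. -/
def boundary (G : SimpleGraph α) : Set α := {u | ∃ v, u ≠ v ∧ MMD G u v}

/-- The strong resolving graph of `G`, with vertex set the boundary of `G`. -/
def srGraph (G : SimpleGraph α) : SimpleGraph (boundary G) where
  Adj u v := u.1 ≠ v.1 ∧ MMD G u.1 v.1
  symm := ⟨fun u v h => ⟨h.1.symm, h.2.2, h.2.1⟩⟩
  loopless := ⟨fun u h => h.1 rfl⟩

/-- The graph `G*`: same vertices, `u ~ v` iff `d_G(u,v) ≥ 2` or `u,v` are true twins. -/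
def gstar (G : SimpleGraph α) : SimpleGraph α where
  Adj u v := u ≠ v ∧ (2 ≤ G.edist u v ∨ TrueTwins G u v)
  symm := by
    constructor
    rintro u v ⟨h1, (h2 | h2)⟩
    · exact ⟨h1.symm, Or.inl (by rwa [G.edist_comm] at h2)⟩
    · exact ⟨h1.symm, Or.inr fun w => (h2 w).symm⟩
  loopless := ⟨fun u h => h.1 rfl⟩

/-- `G*` with its isolated vertices removed. -/
def gstarMinus (G : SimpleGraph α) : SimpleGraph {x | ∃ y, (gstar G).Adj x y} :=
  SimpleGraph.induce _ (gstar G)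

/-- Disjoint union of two graphs. -/
def disjUnion (G : SimpleGraph α) (H : SimpleGraph β) : SimpleGraph (α ⊕ β) where
  Adj x y := match x, y with
    | Sum.inl a, Sum.inl b => G.Adj a b
    | Sum.inr a, Sum.inr b => H.Adj a b
    | _, _ => False
  symm := by
    constructor
    rintro (a | a) (b | b) h <;> simp_all <;> exact h.symm
  loopless := by
    constructor
    rintro (a | a) h <;> simp_all

/-- `k` disjoint copies of a graph. -/
def copies (k : ℕ) (G : SimpleGraph α) : SimpleGraph (Fin k × α) where
  Adj p q := p.1 = q.1 ∧ G.Adj p.2 q.2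
  symm := ⟨fun p q h => ⟨h.1.symm, h.2.symm⟩⟩
  loopless := ⟨fun p h => G.irrefl h.2⟩

/-- The join `K₁ + H` of a single vertex with `H`. -/
def joinK1 (H : SimpleGraph β) : SimpleGraph (Unit ⊕ β) where
  Adj x y := match x, y with
    | Sum.inl _, Sum.inl _ => False
    | Sum.inl _, Sum.inr _ => True
    | Sum.inr _, Sum.inl _ => True
    | Sum.inr a, Sum.inr b => H.Adj a b
  symm := by
    constructor
    rintro (a | a) (b | b) h <;> simp_all <;> exact h.symm
  loopless := by
    constructor
    rintro (a | a) h <;> simp_all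

/-- `w` strongly resolves the pair `u, v`. -/
def StronglyResolves (G : SimpleGraph α) (w u v : α) : Prop :=
  G.edist w u = G.edist w v + G.edist v u ∨ G.edist w v = G.edist w u + G.edist u v

/-- A strong metric generator. -/
def IsStrongGenerator (G : SimpleGraph α) (S : Finset α) : Prop :=
  ∀ u v : α, u ≠ v → ∃ w ∈ S, StronglyResolves G w u v

/-- The strong metric dimension. -/
noncomputable def sdim (G : SimpleGraph α) : ℕ :=
  sInf {k | ∃ S : Finset α, IsStrongGenerator G S ∧ S.card = k}

/-- A vertex cover. -/
def IsVertexCover (G : SimpleGraph α) (S : Finset α) : Prop :=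
  ∀ ⦃u v : α⦄, G.Adj u v → u ∈ S ∨ v ∈ S

/-- The vertex cover number `α(G)`. -/
noncomputable def vcNum (G : SimpleGraph α) : ℕ :=
  sInf {k | ∃ S : Finset α, IsVertexCover G S ∧ S.card = k}

/-- The independence number `β(G)`. -/
noncomputable def indepNum (G : SimpleGraph α) : ℕ :=
  sSup {k | ∃ S : Finset α, (∀ u ∈ S, ∀ v ∈ S, ¬ G.Adj u v) ∧ S.card = k}

/-! When the diameter is at most 2, a distinct non-adjacent pair is diametral and hence mutually
maximally distant, while an adjacent pair is mutually maximally distant exactly when each closed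
neighbourhood contains the other, i.e. when the two vertices are true twins. So `G*` and `G_SR`
have the same edges, and their non-isolated vertices coincide. -/

variable {G : SimpleGraph α} {u v : α}

lemma two_le_edist_of_ne_of_not_adj (huv : u ≠ v) (h : ¬ G.Adj u v) : 2 ≤ G.edist u v := by
  refine (ENat.add_one_le_iff ENat.one_ne_top).mpr (not_le.mp ?_)
  rw [edist_le_one_iff_adj_or_eq]
  tauto

lemma mmd_of_ediam_le_edist (h : G.ediam ≤ G.edist u v) : MMD G u v :=
  ⟨fun _ _ => edist_le_ediam.trans h, fun _ _ => edist_le_ediam.trans (G.edist_comm ▸ h)⟩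

lemma maxDistant_iff_of_adj (h : G.Adj u v) :
    MaxDistant G u v ↔ ∀ w, G.Adj u w → G.Adj v w ∨ v = w := by
  simp only [MaxDistant, edist_eq_one_iff_adj.mpr h, edist_le_one_iff_adj_or_eq]

lemma mmd_iff_trueTwins_of_adj (h : G.Adj u v) : MMD G u v ↔ TrueTwins G u v := by
  rw [MMD, maxDistant_iff_of_adj h, maxDistant_iff_of_adj h.symm]
  refine ⟨fun ⟨huv, hvu⟩ w => ⟨?_, ?_⟩, fun htw => ⟨fun w hw => (htw w).mp (.inl hw),
    fun w hw => (htw w).mpr (.inl hw)⟩⟩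
  · rintro (hw | rfl)
    exacts [huv w hw, .inl h.symm]
  · rintro (hw | rfl)
    exacts [hvu w hw, .inl h]

lemma gstar_adj_iff (hdiam : G.ediam ≤ 2) : (gstar G).Adj u v ↔ u ≠ v ∧ MMD G u v := by
  refine and_congr_right fun huv => ?_
  by_cases hadj : G.Adj u v
  · have h1 : ¬ 2 ≤ G.edist u v := by simp [edist_eq_one_iff_adj.mpr hadj]
    rw [mmd_iff_trueTwins_of_adj hadj, or_iff_right h1]
  · have h2 := two_le_edist_of_ne_of_not_adj huv hadj
    exact iff_of_true (.inl h2) (mmd_of_ediam_le_edist (hdiam.trans h2))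

theorem stmt_12_general (G : SimpleGraph α) (hdiam : G.ediam ≤ 2) :
    Nonempty (gstarMinus G ≃g srGraph G) := by
  have hsupp : {x | ∃ y, (gstar G).Adj x y} = boundary G := by
    ext x
    simp only [Set.mem_ofPred_eq, gstar_adj_iff hdiam, boundary]
  exact ⟨{ toEquiv := Equiv.setCongr hsupp, map_rel_iff' := (gstar_adj_iff hdiam).symm }⟩

theorem stmt_12 (G : SimpleGraph α) (hG : G.Connected) (hdiam : G.ediam ≤ 2) :
    Nonempty (gstarMinus G ≃g srGraph G) :=
  stmt_12_general G hdiam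

end Paper
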